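/- arXiv:2412.14938 — 3 statements merged into one kernel-verified Lean document; each statement's English description precedes it below -/
import Mathlib

section
/- The AuDaLa tape encoding is faithful: given a doubly-linked list of cells c₀, …, cₙ (each cell has optional left and right pointers and a symbol), with cᵢ.right = cᵢ₊₁ and cᵢ₊₁.left = cᵢ for all 0 ≤ i < n, c₀.left = none, cₙ.right = none, the induced tape function t (defined from a head pointer at c₀ by t(0) = c₀.symbol, t(i) = symbol of the i-th right-successor for 0 < i ≤ n, and t(i) = B for i > n or i < 0) equals the initial tape t_S for S = (c₀.symbol, …, cₙ.symbol). -/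
/-- A tape cell: optional left and right pointers and a symbol. -/
structure Cell (Γ L : Type*) where
  left : Option L
  right : Option L
  symbol : Γ

/-- Follow right pointers `k` times from an optional label. -/
def followR {Γ L : Type*} (σ : L → Option (Cell Γ L)) : Option L → ℕ → Option L
  | ol, 0 => ol
  | ol, k + 1 => followR σ (ol.bind fun ℓ => (σ ℓ).bind Cell.right) k

/-- Follow left pointers `k` times from an optional label. -/
def followL {Γ L : Type*} (σ : L → Option (Cell Γ L)) : Option L → ℕ → Option L
  | ol, 0 => ol
  | ol, k + 1 => followL σ (ol.bind fun ℓ => (σ ℓ).bind Cell.left) k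

/-- The symbol stored at an optional label, with blank `B` for dangling pointers. -/
def symAt {Γ L : Type*} (σ : L → Option (Cell Γ L)) (B : Γ) (ol : Option L) : Γ :=
  match ol.bind σ with
  | some c => c.symbol
  | none => B

/-- The tape function induced by a head pointer `h`: follow right pointers for
positive indices and left pointers for negative ones, blank beyond the ends. -/
def tapeOf {Γ L : Type*} (σ : L → Option (Cell Γ L)) (B : Γ) (h : L) : ℤ → Γ :=
  fun i =>
    if 0 ≤ i then symAt σ B (followR σ (some h) i.toNat)
    else symAt σ B (followL σ (some h) (-i).toNat)


lemma followR_none {Γ L : Type*} (σ : L → Option (Cell Γ L)) (k : ℕ) :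
    followR σ none k = none := by
  induction k with
  | zero => rfl
  | succ k ih => simpa [followR] using ih

lemma followL_none {Γ L : Type*} (σ : L → Option (Cell Γ L)) (k : ℕ) :
    followL σ none k = none := by
  induction k with
  | zero => rfl
  | succ k ih => simpa [followL] using ih

/-- a doubly-linked list of cells `c₀,…,cₙ` with symbols `S` induces,
from head `c₀`, exactly the initial tape `t_S` (blank outside `[0,n]`). -/
theorem linked_list_tape_faithful {Γ L : Type*} (σ : L → Option (Cell Γ L)) (B : Γ)
    (n : ℕ) (c : Fin (n + 1) → L) (S : Fin (n + 1) → Γ)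
    (hinj : Function.Injective c)
    (hcell : ∀ i : Fin (n + 1), σ (c i) = some
      { left := if _ : i.val = 0 then none
                else some (c ⟨i.val - 1, by have := i.isLt; omega⟩),
        right := if _ : i.val = n then none
                 else some (c ⟨i.val + 1, by have := i.isLt; omega⟩),
        symbol := S i }) :
    ∀ j : ℤ, tapeOf σ B (c 0) j =
      if h : 0 ≤ j ∧ j ≤ (n : ℤ) then S ⟨j.toNat, by omega⟩ else B := by
  -- key lemma about followR
  have key : ∀ k : ℕ, ∀ i : Fin (n + 1),
      followR σ (some (c i)) k =
        if h : i.val + k ≤ n then some (c ⟨i.val + k, by omega⟩) else none := by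
    intro k
    induction k with
    | zero =>
      intro i
      have : i.val ≤ n := by omega
      simp [followR, this]
    | succ k ih =>
      intro i
      rw [followR]
      by_cases hin : i.val = n
      · have hstep : ((some (c i)).bind fun ℓ => (σ ℓ).bind Cell.right) = none := by
          simp [hcell i, hin]
        rw [hstep, followR_none]
        have : ¬ (i.val + (k+1) ≤ n) := by omega
        simp [this]
      · have hstep : ((some (c i)).bind fun ℓ => (σ ℓ).bind Cell.right) =
            some (c ⟨i.val + 1, by have := i.isLt; omega⟩) := by
          simp [hcell i, hin]
        rw [hstep, ih]
        have hlt : i.val < n := by have := i.isLt; omega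
        by_cases h2 : i.val + 1 + k ≤ n
        · have h3 : i.val + (k+1) ≤ n := by omega
          simp only [h2, h3, dif_pos]
          exact congrArg (some ∘ c) (Fin.ext (by simp; omega))
        · have h3 : ¬ (i.val + (k+1) ≤ n) := by omega
          simp [h2, h3]
  intro j
  unfold tapeOf
  by_cases hj : 0 ≤ j
  · rw [if_pos hj]
    by_cases hjn : j ≤ (n : ℤ)
    · have hk : j.toNat ≤ n := by omega
      rw [key j.toNat 0]
      simp only [Fin.val_zero, Nat.zero_add, hk, dif_pos]
      have : (0 : Fin (n+1)).val + j.toNat = j.toNat := by simp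
      rw [dif_pos ⟨hj, hjn⟩]
      simp [symAt, hcell]
    · have hk : ¬ ((0:Fin (n+1)).val + j.toNat ≤ n) := by simp; omega
      rw [key j.toNat 0, dif_neg hk]
      rw [dif_neg (by omega)]
      simp [symAt]
  · rw [if_neg hj, dif_neg (by omega)]
    have hpos : ∃ m, (-j).toNat = m + 1 := ⟨(-j).toNat - 1, by omega⟩
    obtain ⟨m, hm⟩ := hpos
    rw [hm, followL]
    have hstep : ((some (c 0)).bind fun ℓ => (σ ℓ).bind Cell.left) = none := by
      simp [hcell 0]
    rw [hstep, followL_none]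
    simp [symAt]
end

section
/- One iteration of the array-based reachability program propagates at most one successor per node: if each node v with reach(v) = true and done(v) < |succ(v)| sets reach(succ(v)[done(v)]) := true and increments done(v), then after k iterations, reach holds exactly for nodes reachable from initially-reached nodes by a path realizable within the per-node sequential array traversal schedule; in particular, the fixpoint of this iteration still equals the set of nodes reachable from the initially-reached set. -/
/-- One synchronous iteration of the array-based reachability program: every node `u`
with `reach u` and `done u < |succ u|` marks `succ u [done u]` reached and increments
its counter `done u` (reads are from the pre-state). -/
def arrayStep {V : Type*} [Fintype V] [DecidableEq V] (succ : V → List V)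
    (σ : (V → Bool) × (V → ℕ)) : (V → Bool) × (V → ℕ) :=
  (fun v => σ.1 v ||
      decide (∃ u, σ.1 u = true ∧ σ.2 u < (succ u).length ∧ (succ u)[σ.2 u]? = some v),
   fun u => if σ.1 u = true ∧ σ.2 u < (succ u).length then σ.2 u + 1 else σ.2 u)

section Aux

variable {V : Type*} [Fintype V] [DecidableEq V] (succ : V → List V)

lemma arrayStep_reach_mono (σ : (V → Bool) × (V → ℕ)) (v : V) (h : σ.1 v = true) :
    (arrayStep succ σ).1 v = true := by
  simp [arrayStep, h]

lemma arrayStep_done_mono (σ : (V → Bool) × (V → ℕ)) (u : V) :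
    σ.2 u ≤ (arrayStep succ σ).2 u := by
  simp only [arrayStep]
  split <;> omega

/-- Invariant: counters bounded by array lengths. -/
lemma iter_done_le (reach₀ : V → Bool) (k : ℕ) (u : V) :
    ((arrayStep succ)^[k] (reach₀, fun _ => 0)).2 u ≤ (succ u).length := by
  induction k with
  | zero => simp
  | succ k ih =>
    rw [Function.iterate_succ_apply']
    simp only [arrayStep]
    split <;> omega

/-- Potential function. -/
noncomputable def pot (σ : (V → Bool) × (V → ℕ)) : ℕ :=
  (∑ u, σ.2 u) + (Finset.univ.filter (fun u => σ.1 u = true)).card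

lemma pot_lt (σ : (V → Bool) × (V → ℕ)) (h : arrayStep succ σ ≠ σ) :
    pot σ < pot (arrayStep succ σ) := by
  have hsum : ∑ u, σ.2 u ≤ ∑ u, (arrayStep succ σ).2 u :=
    Finset.sum_le_sum fun u _ => arrayStep_done_mono succ σ u
  have hsub : Finset.univ.filter (fun u => σ.1 u = true) ⊆
      Finset.univ.filter (fun u => (arrayStep succ σ).1 u = true) := by
    intro u hu
    simp only [Finset.mem_filter, Finset.mem_univ, true_and] at hu ⊢
    exact arrayStep_reach_mono succ σ u hu
  have hcard := Finset.card_le_card hsub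
  have : (arrayStep succ σ).1 ≠ σ.1 ∨ (arrayStep succ σ).2 ≠ σ.2 := by
    by_contra hc
    push_neg at hc
    exact h (Prod.ext hc.1 hc.2)
  rcases this with h1 | h2
  · -- some node newly reached
    have : ∃ v, (arrayStep succ σ).1 v = true ∧ σ.1 v ≠ true := by
      by_contra hc
      push_neg at hc
      apply h1
      funext v
      cases hv' : (arrayStep succ σ).1 v with
      | true => exact (hc v hv').symm
      | false =>
        cases hv : σ.1 v with
        | true => exact absurd (arrayStep_reach_mono succ σ v hv) (by simp [hv'])
        | false => rfl
    obtain ⟨v, hv1, hv2⟩ := this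
    have hss : Finset.univ.filter (fun u => σ.1 u = true) ⊂
        Finset.univ.filter (fun u => (arrayStep succ σ).1 u = true) := by
      refine ⟨hsub, fun hcon => ?_⟩
      have := hcon (by simp [hv1] : v ∈ _)
      simp at this
      exact hv2 this
    have := Finset.card_lt_card hss
    unfold pot; omega
  · -- some counter strictly increased
    have : ∃ u, σ.2 u < (arrayStep succ σ).2 u := by
      by_contra hc
      push_neg at hc
      exact h2 (funext fun u => le_antisymm (hc u) (arrayStep_done_mono succ σ u))
    obtain ⟨u, hu⟩ := this
    have : ∑ x, σ.2 x < ∑ x, (arrayStep succ σ).2 x :=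
      Finset.sum_lt_sum (fun x _ => arrayStep_done_mono succ σ x) ⟨u, Finset.mem_univ u, hu⟩
    unfold pot; omega

lemma pot_le (σ : (V → Bool) × (V → ℕ)) (h : ∀ u, σ.2 u ≤ (succ u).length) :
    pot σ ≤ (∑ u, (succ u).length) + Fintype.card V := by
  unfold pot
  have h1 : ∑ u, σ.2 u ≤ ∑ u, (succ u).length := Finset.sum_le_sum fun u _ => h u
  have h2 : (Finset.univ.filter (fun u => σ.1 u = true)).card ≤ Fintype.card V :=
    le_trans (Finset.card_le_card (Finset.filter_subset _ _)) (by simp)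
  omega

/-- Forward invariant: every reached node is reachable from an initially reached node. -/
lemma iter_reach_sound (reach₀ : V → Bool) (k : ℕ) (v : V)
    (h : ((arrayStep succ)^[k] (reach₀, fun _ => 0)).1 v = true) :
    ∃ u, reach₀ u = true ∧ Relation.ReflTransGen (fun a b => b ∈ succ a) u v := by
  induction k generalizing v with
  | zero => exact ⟨v, h, Relation.ReflTransGen.refl⟩
  | succ k ih =>
    rw [Function.iterate_succ_apply'] at h
    simp only [arrayStep, Bool.or_eq_true, decide_eq_true_eq] at h
    rcases h with h | ⟨u, hu, _, hget⟩
    · exact ih v h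
    · obtain ⟨w, hw0, hwu⟩ := ih u hu
      obtain ⟨hlen, hgeteq⟩ := List.getElem?_eq_some_iff.mp hget
      exact ⟨w, hw0, hwu.tail (hgeteq ▸ List.getElem_mem hlen)⟩

/-- The initially reached nodes stay reached. -/
lemma iter_reach_init (reach₀ : V → Bool) (k : ℕ) (v : V) (h : reach₀ v = true) :
    ((arrayStep succ)^[k] (reach₀, fun _ => 0)).1 v = true := by
  induction k with
  | zero => exact h
  | succ k ih =>
    rw [Function.iterate_succ_apply']
    exact arrayStep_reach_mono succ _ v ih

/-- Processed-prefix invariant: entries below the counter are reached. -/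
lemma iter_prefix (reach₀ : V → Bool) (k : ℕ) :
    ∀ u i v, i < ((arrayStep succ)^[k] (reach₀, fun _ => 0)).2 u →
      (succ u)[i]? = some v → ((arrayStep succ)^[k] (reach₀, fun _ => 0)).1 v = true := by
  induction k with
  | zero => intro u i v h; simp at h
  | succ k ih =>
    intro u i v hi hget
    rw [Function.iterate_succ_apply'] at hi ⊢
    simp only [arrayStep] at hi
    split at hi
    · rename_i hc
      rcases Nat.lt_succ_iff_lt_or_eq.mp hi with hi' | hi'
      · exact arrayStep_reach_mono succ _ v (ih u i v hi' hget)
      · simp only [arrayStep, Bool.or_eq_true, decide_eq_true_eq]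
        exact Or.inr ⟨u, hc.1, hc.2, hi' ▸ hget⟩
    · exact arrayStep_reach_mono succ _ v (ih u i v hi hget)

end Aux

/-- the array-based reachability iteration stabilizes, and at
stabilization `reach v` holds iff `v` is reachable (via edges `w ∈ succ u`) from the
initially reached nodes. -/
theorem array_reachability_correct {V : Type*} [Fintype V] [DecidableEq V]
    (succ : V → List V) (reach₀ : V → Bool) :
    ∃ n, (arrayStep succ)^[n + 1] (reach₀, fun _ => 0) =
           (arrayStep succ)^[n] (reach₀, fun _ => 0) ∧
      ∀ v, ((arrayStep succ)^[n] (reach₀, fun _ => 0)).1 v = true ↔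
        ∃ u, reach₀ u = true ∧ Relation.ReflTransGen (fun a b => b ∈ succ a) u v := by
  set x₀ : (V → Bool) × (V → ℕ) := (reach₀, fun _ => 0) with hx₀
  set B : ℕ := (∑ u, (succ u).length) + Fintype.card V with hB
  -- Find a fixpoint index
  have hfix : ∃ n, arrayStep succ ((arrayStep succ)^[n] x₀) = (arrayStep succ)^[n] x₀ := by
    by_contra hc
    push_neg at hc
    have key : ∀ k, k ≤ pot ((arrayStep succ)^[k] x₀) := by
      intro k
      induction k with
      | zero => omega
      | succ k ih =>
        have := pot_lt succ ((arrayStep succ)^[k] x₀) (hc k)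
        rw [Function.iterate_succ_apply']
        omega
    have hle := pot_le succ ((arrayStep succ)^[B + 1] x₀) (iter_done_le succ reach₀ (B + 1))
    have := key (B + 1)
    omega
  obtain ⟨n, hn⟩ := hfix
  refine ⟨n, by rw [Function.iterate_succ_apply']; exact hn, fun v => ⟨iter_reach_sound succ reach₀ n v, ?_⟩⟩
  rintro ⟨u, hu0, hpath⟩
  -- at the fixpoint, reached nodes have fully processed arrays
  set σ := (arrayStep succ)^[n] x₀ with hσ
  have hdone : ∀ w, σ.1 w = true → (succ w).length ≤ σ.2 w := by
    intro w hw
    by_contra hlt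
    push_neg at hlt
    have := congrArg (fun s => s.2 w) hn
    simp only [arrayStep] at this
    rw [if_pos ⟨hw, hlt⟩] at this
    omega
  have hclosed : ∀ a b, σ.1 a = true → b ∈ succ a → σ.1 b = true := by
    intro a b ha hb
    obtain ⟨i, hi, hget⟩ := List.getElem_of_mem hb
    exact iter_prefix succ reach₀ n a i b (lt_of_lt_of_le hi (hdone a ha))
      (by rw [List.getElem?_eq_getElem hi, hget])
  have hstart : σ.1 u = true := iter_reach_init succ reach₀ n u hu0
  induction hpath with
  | refl => exact hstart
  | tail _ hbc ih => exact hclosed _ _ ih hbc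
end

section
/- Stability-flag soundness: in a loop that maintains a boolean flag set to true at the start of each iteration and set to false by any transition that changes a monitored parameter, if the flag is true at the end of an iteration then the monitored parameters at the end of the iteration equal their values at the start of that iteration. -/
/-- Execute one atomic update `(x, v)` on a state-and-flag pair: the state is updated
at `x`, and if `x` is monitored the flag is conjoined with whether the write left the
old value unchanged (rule ComWr's stability update). -/
def execUpdate {Var Val : Type*} [DecidableEq Var] [DecidableEq Val]
    (Mon : Set Var) [DecidablePred (· ∈ Mon)]
    (p : (Var → Val) × Bool) (u : Var × Val) : (Var → Val) × Bool :=
  (Function.update p.1 u.1 u.2,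
   if u.1 ∈ Mon then p.2 && decide (p.1 u.1 = u.2) else p.2)

theorem flag_mono {Var Val : Type*} [DecidableEq Var] [DecidableEq Val]
    (Mon : Set Var) [DecidablePred (· ∈ Mon)] (l : List (Var × Val)) :
    ∀ p : (Var → Val) × Bool, (l.foldl (execUpdate Mon) p).2 = true → p.2 = true := by
  induction l with
  | nil => intro p h; exact h
  | cons u t ih =>
    intro p h
    simp only [List.foldl_cons] at h
    have := ih _ h
    simp only [execUpdate] at this
    split at this
    · exact ((Bool.and_eq_true _ _).mp this).1
    · exact this

theorem stability_aux {Var Val : Type*} [DecidableEq Var] [DecidableEq Val]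
    (Mon : Set Var) [DecidablePred (· ∈ Mon)] (l : List (Var × Val)) :
    ∀ (σ : Var → Val) (b : Bool),
      (l.foldl (execUpdate Mon) (σ, b)).2 = true →
      ∀ x ∈ Mon, (l.foldl (execUpdate Mon) (σ, b)).1 x = σ x := by
  induction l with
  | nil => intro σ b _ x _; rfl
  | cons u t ih =>
    intro σ b h x hx
    simp only [List.foldl_cons] at *
    have heq : execUpdate Mon (σ, b) u =
        (Function.update σ u.1 u.2,
         if u.1 ∈ Mon then b && decide (σ u.1 = u.2) else b) := rfl
    rw [heq] at h ⊢
    have key := ih _ _ h x hx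
    rw [key]
    by_cases hm : u.1 ∈ Mon
    · have hb := flag_mono Mon t _ h
      simp only [if_pos hm, Bool.and_eq_true, decide_eq_true_eq] at hb
      rcases eq_or_ne x u.1 with rfl | hne
      · simp [Function.update_self, hb.2]
      · simp [Function.update_of_ne hne]
    · have hne : x ≠ u.1 := fun e => hm (e ▸ hx)
      simp [Function.update_of_ne hne]

/-- stability-flag soundness: starting an iteration with flag `true`,
if after executing a finite sequence of atomic updates the flag is still `true`, then
every monitored variable has the same value at the end of the iteration as at its
start. -/
theorem stability_flag_sound {Var Val : Type*} [DecidableEq Var] [DecidableEq Val]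
    (Mon : Set Var) [DecidablePred (· ∈ Mon)]
    (σ₀ : Var → Val) (l : List (Var × Val))
    (hflag : (l.foldl (execUpdate Mon) (σ₀, true)).2 = true) :
    ∀ x ∈ Mon, (l.foldl (execUpdate Mon) (σ₀, true)).1 x = σ₀ x := by
  exact stability_aux Mon l σ₀ true hflag
end
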